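/- Under the model constraints, the parameters are exactly recovered by population projections: θ = (XᵀX)⁻¹ Xᵀ P_R (Xβ + Xθ + α), β = (XᵀX)⁻¹ Xᵀ P_C (Xβ + Xθ + α), and α = P_N (Xβ + Xθ + α). -/

import Mathlib

open Matrix

noncomputable def specNorm {m n : Type*} [Fintype m] [Fintype n] [DecidableEq n]
    (A : Matrix m n ℝ) : ℝ :=
  ‖LinearMap.toContinuousLinearMap (Matrix.toEuclideanLin A)‖

noncomputable def vnorm {n : Type*} [Fintype n] (v : n → ℝ) : ℝ :=
  Real.sqrt (∑ i, v i ^ 2)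

/-!
Rotating by the singular vectors makes all Gram matrices explicit: `Z̃ᵀZ̃ = 1`, `W̃ᵀW̃ = 1`
and `Z̃ᵀW̃ = Σ`. Hence the first `r` columns of `Z̃` are orthonormal and orthogonal to every
column of `M`, so `P_R` fixes `Xθ` and kills `Xβ` and `α`, while `Mᵀ` kills `Xθ`. The Gram
matrix `MᵀM` is the block matrix `[[1, D], [Dᵀ, 1]]` with `D` the rectangular diagonal of
`σ_{r+1}, …, σ_{r+s}`; its Schur complement `1 - DᵀD = diag (1 - σ_{r+k}²)` is invertible
because `0 ≤ σ_{r+k} < 1`. Thus `(MᵀM)⁻¹MᵀM = 1`, and `P_C`, `P_N` return the two block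
components of any vector `M v = Xβ + α`.
-/

namespace Matrix

theorem exists_mulVec_eq_of_mem_span_col {R n ρ : Type*} [CommRing R] [Fintype ρ]
    {C : Matrix n ρ R} {v : n → R} (h : v ∈ Submodule.span R (Set.range C.col)) :
    ∃ x, C *ᵥ x = v := by
  rwa [← range_mulVecLin] at h

variable {R : Type*} [CommRing R] {n m ι κ ρ : Type*} [Fintype n]

theorem transpose_mul_mul_of_eq_mul_mul_transpose [Fintype m] [Fintype ι] [DecidableEq m]
    [DecidableEq ι] {Z : Matrix n m R} {W : Matrix n ι R} {U : Matrix m m R} {V : Matrix ι ι R} {S : Matrix m ι R}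
    (hU : Uᵀ * U = 1) (hV : Vᵀ * V = 1) (h : Zᵀ * W = U * S * Vᵀ) :
    (Z * U)ᵀ * (W * V) = S := by
  rw [transpose_mul, Matrix.mul_assoc, ← Matrix.mul_assoc Zᵀ, h]
  simp only [Matrix.mul_assoc, hV, Matrix.mul_one]
  rw [← Matrix.mul_assoc, hU, Matrix.one_mul]

theorem transpose_mul_self_mul_of_orthogonal [Fintype m] [DecidableEq m] {Z : Matrix n m R}
    {U : Matrix m m R} (hZ : Zᵀ * Z = 1) (hU : Uᵀ * U = 1) : (Z * U)ᵀ * (Z * U) = 1 :=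
  transpose_mul_mul_of_eq_mul_mul_transpose hU hU
    (by rw [hZ, Matrix.mul_one, mul_eq_one_comm.mp hU])

theorem transpose_submatrix_mul_submatrix {m' : Type*} (P : Matrix n m R) (Q : Matrix n m' R)
    (f : ι → m) (g : κ → m') :
    (P.submatrix id f)ᵀ * Q.submatrix id g = (Pᵀ * Q).submatrix f g := by
  rw [transpose_submatrix, submatrix_mul _ _ f id g Function.bijective_id]

theorem transpose_submatrix_mul_submatrix_self [DecidableEq m] [DecidableEq ι] {Q : Matrix n m R}
    (hQ : Qᵀ * Q = 1) {f : ι → m} (hf : Function.Injective f) :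
    (Q.submatrix id f)ᵀ * Q.submatrix id f = 1 := by
  rw [transpose_submatrix_mul_submatrix, hQ, submatrix_one f hf]

theorem transpose_submatrix_mul_submatrix_eq_zero [DecidableEq m] {Q : Matrix n m R}
    (hQ : Qᵀ * Q = 1) {f : ι → m} {g : κ → m} (hfg : ∀ i j, f i ≠ g j) :
    (Q.submatrix id f)ᵀ * Q.submatrix id g = 0 := by
  rw [transpose_submatrix_mul_submatrix, hQ]
  exact Matrix.ext fun i j => one_apply_ne (hfg i j)

theorem transpose_mul_eq_zero_of_transpose_mul_eq_zero {A : Matrix n ι R} {C : Matrix n ρ R}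
    (h : Cᵀ * A = 0) : Aᵀ * C = 0 := by
  rw [← transpose_transpose (Aᵀ * C), transpose_mul, transpose_transpose, h, transpose_zero]

theorem fromCols_transpose_mul_fromCols (A : Matrix n ι R) (B : Matrix n κ R) :
    (fromCols A B)ᵀ * fromCols A B = fromBlocks (Aᵀ * A) (Aᵀ * B) (Bᵀ * A) (Bᵀ * B) := by
  rw [transpose_fromCols, fromRows_mul_fromCols]

theorem isUnit_det_fromBlocks_one_transpose_one {𝕜 : Type*} [Field 𝕜] [Fintype ι] [Fintype κ]
    [DecidableEq ι] [DecidableEq κ] {D : Matrix ι κ 𝕜} {d : κ → 𝕜} (hD : Dᵀ * D = diagonal d)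
    (hd : ∀ j, d j ≠ 1) : IsUnit (fromBlocks 1 D Dᵀ 1).det := by
  rw [det_fromBlocks_one₁₁, hD, isUnit_iff_ne_zero, ← diagonal_one, diagonal_sub, det_diagonal]
  exact Finset.prod_ne_zero_iff.mpr fun j _ => sub_ne_zero.mpr (hd j).symm

theorem isUnit_det_gram_fromCols {𝕜 : Type*} [Field 𝕜] [Fintype ι] [Fintype κ]
    [DecidableEq ι] [DecidableEq κ] {A : Matrix n ι 𝕜} {B : Matrix n κ 𝕜} {d : κ → 𝕜}
    (hA : Aᵀ * A = 1) (hB : Bᵀ * B = 1) (hAB : (Aᵀ * B)ᵀ * (Aᵀ * B) = diagonal d)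
    (hd : ∀ j, d j ≠ 1) : IsUnit ((fromCols A B)ᵀ * fromCols A B).det := by
  have hBA : Bᵀ * A = (Aᵀ * B)ᵀ := by rw [transpose_mul, transpose_transpose]
  rw [fromCols_transpose_mul_fromCols, hA, hB, hBA]
  exact isUnit_det_fromBlocks_one_transpose_one hAB hd

theorem mul_transpose_mulVec_add_of_orthogonal [Fintype ι] [Fintype κ] [Fintype ρ]
    [DecidableEq ρ] {A : Matrix n ι R} {B : Matrix n κ R} {C : Matrix n ρ R}
    (hC : Cᵀ * C = 1) (hCA : Cᵀ * A = 0) (hCB : Cᵀ * B = 0)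
    (a : ι → R) (x : ρ → R) (b : κ → R) :
    (C * Cᵀ) *ᵥ (A *ᵥ a + C *ᵥ x + B *ᵥ b) = C *ᵥ x := by
  rw [← mulVec_mulVec]
  congr 1
  rw [mulVec_add, mulVec_add, mulVec_mulVec, mulVec_mulVec, mulVec_mulVec, hC, hCA, hCB,
    zero_mulVec, zero_mulVec, one_mulVec, zero_add, add_zero]

theorem mul_inv_gram_mul_transpose_mulVec_add [Fintype ι] [Fintype κ] [Fintype ρ]
    [DecidableEq ι] [DecidableEq κ] {A : Matrix n ι R} {B : Matrix n κ R} {C : Matrix n ρ R}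
    (E : Matrix m (ι ⊕ κ) R) (hM : IsUnit ((fromCols A B)ᵀ * fromCols A B).det)
    (hCA : Cᵀ * A = 0) (hCB : Cᵀ * B = 0) (a : ι → R) (x : ρ → R) (b : κ → R) :
    (E * ((fromCols A B)ᵀ * fromCols A B)⁻¹ * (fromCols A B)ᵀ) *ᵥ (A *ᵥ a + C *ᵥ x + B *ᵥ b)
      = E *ᵥ Sum.elim a b := by
  have hMC : (fromCols A B)ᵀ * C = 0 := by
    rw [transpose_fromCols, fromRows_mul, transpose_mul_eq_zero_of_transpose_mul_eq_zero hCA,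
      transpose_mul_eq_zero_of_transpose_mul_eq_zero hCB, fromRows_zero]
  have hsplit : A *ᵥ a + C *ᵥ x + B *ᵥ b = fromCols A B *ᵥ Sum.elim a b + C *ᵥ x := by
    rw [fromCols_mulVec_sumElim]; abel
  rw [hsplit, mulVec_add, mulVec_mulVec, mulVec_mulVec, Matrix.mul_assoc _ _ C, hMC,
    Matrix.mul_zero, zero_mulVec, add_zero, Matrix.mul_assoc, Matrix.mul_assoc,
    nonsing_inv_mul _ hM, Matrix.mul_one]

theorem inv_gram_mul_transpose_mulVec_mulVec [Fintype m] [DecidableEq m] {X : Matrix n m R}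
    (hX : IsUnit (Xᵀ * X).det) (v : m → R) : ((Xᵀ * X)⁻¹ * Xᵀ) *ᵥ (X *ᵥ v) = v := by
  rw [mulVec_mulVec, Matrix.mul_assoc, nonsing_inv_mul _ hX, one_mulVec]

theorem projections_recover_components [Fintype m] [Fintype ι] [Fintype κ] [Fintype ρ]
    [DecidableEq m] [DecidableEq ι] [DecidableEq κ] [DecidableEq ρ] {X : Matrix n m R}
    {A : Matrix n ι R} {B : Matrix n κ R} {C : Matrix n ρ R} (hC : Cᵀ * C = 1)
    (hCA : Cᵀ * A = 0) (hCB : Cᵀ * B = 0) (hM : IsUnit ((fromCols A B)ᵀ * fromCols A B).det)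
    (hX : IsUnit (Xᵀ * X).det) {θ β : m → R} {x : ρ → R} {a : ι → R} (b : κ → R)
    (hx : C *ᵥ x = X *ᵥ θ) (ha : A *ᵥ a = X *ᵥ β) :
    θ = ((Xᵀ * X)⁻¹ * Xᵀ * (C * Cᵀ)) *ᵥ (X *ᵥ β + X *ᵥ θ + B *ᵥ b)
    ∧ β = ((Xᵀ * X)⁻¹ * Xᵀ * (fromCols A (0 : Matrix n κ R)
        * ((fromCols A B)ᵀ * fromCols A B)⁻¹ * (fromCols A B)ᵀ)) *ᵥ (X *ᵥ β + X *ᵥ θ + B *ᵥ b)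
    ∧ B *ᵥ b = (fromCols (0 : Matrix n ι R) B
        * ((fromCols A B)ᵀ * fromCols A B)⁻¹ * (fromCols A B)ᵀ) *ᵥ (X *ᵥ β + X *ᵥ θ + B *ᵥ b) := by
  rw [← hx, ← ha]
  refine ⟨?_, ?_, ?_⟩
  · rw [← mulVec_mulVec, mul_transpose_mulVec_add_of_orthogonal hC hCA hCB, hx,
      inv_gram_mul_transpose_mulVec_mulVec hX]
  · rw [← mulVec_mulVec, mul_inv_gram_mul_transpose_mulVec_add _ hM hCA hCB,
      fromCols_mulVec_sumElim, zero_mulVec, add_zero, ha, inv_gram_mul_transpose_mulVec_mulVec hX]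
  · rw [mul_inv_gram_mul_transpose_mulVec_add _ hM hCA hCB, fromCols_mulVec_sumElim,
      zero_mulVec, zero_add]

end Matrix

/-- Indexes the columns `r + 1, …, p` of the paper's 1-based notation. -/
def Fin.natAddSub (r : ℕ) {p : ℕ} (j : Fin (p - r)) : Fin p := ⟨r + j, by omega⟩

theorem Fin.natAddSub_injective (r p : ℕ) : Function.Injective (Fin.natAddSub r (p := p)) :=
  fun i j h => by simpa [Fin.natAddSub, Fin.ext_iff] using h

theorem Fin.castLE_ne_natAddSub {r p : ℕ} (h : r ≤ p) (i : Fin r) (j : Fin (p - r)) :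
    Fin.castLE h i ≠ Fin.natAddSub r j := by
  simp only [ne_eq, Fin.ext_iff, Fin.val_castLE, Fin.natAddSub]
  omega

theorem Finset.sum_attach_range_vecMulVec {R : Type*} [CommRing R] {n p r : ℕ}
    (Q : Matrix (Fin n) (Fin p) R) (h : r ≤ p) :
    ∑ i ∈ (Finset.range r).attach,
        vecMulVec (fun a => Q a ⟨i.1, by have := Finset.mem_range.mp i.2; omega⟩)
          (fun a => Q a ⟨i.1, by have := Finset.mem_range.mp i.2; omega⟩)
      = Q.submatrix id (Fin.castLE h) * (Q.submatrix id (Fin.castLE h))ᵀ := by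
  refine Matrix.ext fun a b => ?_
  rw [Matrix.sum_apply, mul_apply]
  exact Finset.sum_bij' (fun i _ => ⟨i.1, Finset.mem_range.mp i.2⟩)
    (fun j _ => ⟨j.1, Finset.mem_range.mpr j.2⟩) (by simp) (by simp) (by simp) (by simp)
    (by simp [vecMulVec_apply])

def rectDiag {R : Type*} [Zero R] {m k : ℕ} (τ : ℕ → R) : Matrix (Fin m) (Fin k) R :=
  Matrix.of fun i j => if (i : ℕ) = j then τ i else 0

section RectDiag

variable {R : Type*} [CommRing R] {m k : ℕ} (τ : ℕ → R)

theorem rectDiag_transpose_mul_self :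
    (rectDiag τ : Matrix (Fin m) (Fin k) R)ᵀ * (rectDiag τ : Matrix (Fin m) (Fin k) R)
      = diagonal fun j : Fin k => if (j : ℕ) < m then τ j ^ 2 else 0 := by
  refine Matrix.ext fun j j' => ?_
  rw [mul_apply, diagonal_apply]
  simp only [rectDiag, transpose_apply, of_apply]
  by_cases hj : (j : ℕ) < m
  · rw [Finset.sum_eq_single ⟨j, hj⟩]
    · by_cases h : j = j'
      · subst h; simp [sq, hj]
      · simp [h, Fin.val_eq_val]
    · intro i _ hi
      simp [Fin.ext_iff.not.mp hi]
    · simp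
  · rw [Finset.sum_eq_zero, if_neg hj, ite_self]
    intro i _
    rw [if_neg (by omega), zero_mul]

theorem rectDiag_submatrix_natAddSub (r : ℕ) :
    (rectDiag τ : Matrix (Fin m) (Fin k) R).submatrix (Fin.natAddSub r) (Fin.natAddSub r)
      = rectDiag fun i => τ (r + i) := by
  refine Matrix.ext fun i j => ?_
  simp [rectDiag, Fin.natAddSub]

theorem rectDiag_submatrix_castLE_natAddSub {r : ℕ} (h : r ≤ m) :
    (rectDiag τ : Matrix (Fin m) (Fin k) R).submatrix (Fin.castLE h) (Fin.natAddSub r) = 0 := by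
  refine Matrix.ext fun i j => ?_
  simp only [rectDiag, submatrix_apply, of_apply, Fin.val_castLE, Fin.natAddSub, Matrix.zero_apply]
  rw [if_neg (by omega)]

end RectDiag

theorem abs_lt_one_of_antitone {σ : ℕ → ℝ} {r s : ℕ} (hlt : σ r < 1)
    (hanti : ∀ i j, i ≤ j → σ j ≤ σ i) (hpos : 0 < σ (r + s - 1))
    (hzero : ∀ i, r + s ≤ i → σ i = 0) (k : ℕ) : |σ (r + k)| < 1 := by
  have hnonneg : 0 ≤ σ (r + k) := by
    rcases le_or_gt (r + s) (r + k) with h | h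
    · exact (hzero _ h).ge
    · exact hpos.le.trans (hanti _ _ (by omega))
  rw [abs_of_nonneg hnonneg]
  exact (hanti _ _ (by omega)).trans_lt hlt

theorem isUnit_det_gram_tails {n p K : ℕ} (r : ℕ) {Zt : Matrix (Fin n) (Fin p) ℝ}
    {Wt : Matrix (Fin n) (Fin K) ℝ} {σ : ℕ → ℝ} (hZ : Ztᵀ * Zt = 1) (hW : Wtᵀ * Wt = 1)
    (hZW : Ztᵀ * Wt = rectDiag σ) (hσ : ∀ k, |σ (r + k)| < 1) :
    IsUnit ((fromCols (Zt.submatrix id (Fin.natAddSub r)) (Wt.submatrix id (Fin.natAddSub r)))ᵀ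
      * fromCols (Zt.submatrix id (Fin.natAddSub r)) (Wt.submatrix id (Fin.natAddSub r))).det := by
  refine isUnit_det_gram_fromCols
    (transpose_submatrix_mul_submatrix_self hZ (Fin.natAddSub_injective r p))
    (transpose_submatrix_mul_submatrix_self hW (Fin.natAddSub_injective r K))
    (d := fun j => if (j : ℕ) < p - r then σ (r + j) ^ 2 else 0) ?_ (fun j => ?_)
  · rw [transpose_submatrix_mul_submatrix, hZW, rectDiag_submatrix_natAddSub,
      rectDiag_transpose_mul_self]
  · split_ifs
    · exact ((sq_lt_one_iff_abs_lt_one _).mpr (hσ j)).ne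
    · exact zero_ne_one

theorem stmt_5
    (n p K r s : ℕ) (hrp : r + s ≤ p)
    (Z : Matrix (Fin n) (Fin p) ℝ) (W : Matrix (Fin n) (Fin K) ℝ)
    (hZ : Zᵀ * Z = 1) (hW : Wᵀ * W = 1)
    (U : Matrix (Fin p) (Fin p) ℝ) (V : Matrix (Fin K) (Fin K) ℝ)
    (hU : Uᵀ * U = 1) (hV : Vᵀ * V = 1)
    (σ : ℕ → ℝ)
    (hσlt : σ r < 1)
    (hσanti : ∀ i j, i ≤ j → σ j ≤ σ i)
    (hσpos : 0 < σ (r + s - 1))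
    (hσzero : ∀ i, r + s ≤ i → σ i = 0)
    (hSVD : Zᵀ * W
      = U * (Matrix.of fun (i : Fin p) (j : Fin K) =>
          if (i : ℕ) = (j : ℕ) then σ (i : ℕ) else 0) * Vᵀ)
    (Zt : Matrix (Fin n) (Fin p) ℝ) (hZt : Zt = Z * U)
    (Wt : Matrix (Fin n) (Fin K) ℝ) (hWt : Wt = W * V)
    (M : Matrix (Fin n) (Fin (p - r) ⊕ Fin (K - r)) ℝ)
    (hMl : ∀ (a : Fin n) (j : Fin (p - r)),
      M a (Sum.inl j) = Zt a ⟨r + j.1, by have := j.2; omega⟩)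
    (hMr : ∀ (a : Fin n) (j : Fin (K - r)),
      M a (Sum.inr j) = Wt a ⟨r + j.1, by have := j.2; omega⟩)
    (PR PC PN : Matrix (Fin n) (Fin n) ℝ)
    (hPR : PR = ∑ i ∈ (Finset.range r).attach,
      Matrix.vecMulVec
        (fun a : Fin n => Zt a ⟨i.1, by have := Finset.mem_range.mp i.2; omega⟩)
        (fun a : Fin n => Zt a ⟨i.1, by have := Finset.mem_range.mp i.2; omega⟩))
    (hPC : PC = (Matrix.of fun (a : Fin n) (j : Fin (p - r) ⊕ Fin (K - r)) =>
        Sum.elim (fun j' : Fin (p - r) => Zt a ⟨r + j'.1, by have := j'.2; omega⟩)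
                 (fun _ : Fin (K - r) => (0 : ℝ)) j) * (Mᵀ * M)⁻¹ * Mᵀ)
    (hPN : PN = (Matrix.of fun (a : Fin n) (j : Fin (p - r) ⊕ Fin (K - r)) =>
        Sum.elim (fun _ : Fin (p - r) => (0 : ℝ))
                 (fun j' : Fin (K - r) => Wt a ⟨r + j'.1, by have := j'.2; omega⟩) j)
        * (Mᵀ * M)⁻¹ * Mᵀ)
    (X : Matrix (Fin n) (Fin p) ℝ)
    (hXinv : IsUnit (Xᵀ * X).det)
    (β θ : Fin p → ℝ) (α : Fin n → ℝ)
    (hθmem : X.mulVec θ ∈ Submodule.span ℝ (Set.range (fun j : Fin r =>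
        fun a : Fin n => Zt a ⟨j.1, by have := j.2; omega⟩)))
    (hβmem : X.mulVec β ∈ Submodule.span ℝ (Set.range (fun j : Fin (p - r) =>
        fun a : Fin n => Zt a ⟨r + j.1, by have := j.2; omega⟩)))
    (hαmem : α ∈ Submodule.span ℝ (Set.range (fun j : Fin (K - r) =>
        fun a : Fin n => Wt a ⟨r + j.1, by have := j.2; omega⟩))) :
    θ = ((Xᵀ * X)⁻¹ * Xᵀ * PR).mulVec (X.mulVec β + X.mulVec θ + α)
    ∧ β = ((Xᵀ * X)⁻¹ * Xᵀ * PC).mulVec (X.mulVec β + X.mulVec θ + α)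
    ∧ α = PN.mulVec (X.mulVec β + X.mulVec θ + α) := by
  have hrp' : r ≤ p := by omega
  set C := Zt.submatrix id (Fin.castLE hrp')
  set A := Zt.submatrix id (Fin.natAddSub r (p := p))
  set B := Wt.submatrix id (Fin.natAddSub r (p := K))
  have hZtZt : Ztᵀ * Zt = 1 := hZt ▸ transpose_mul_self_mul_of_orthogonal hZ hU
  have hWtWt : Wtᵀ * Wt = 1 := hWt ▸ transpose_mul_self_mul_of_orthogonal hW hV
  have hZtWt : Ztᵀ * Wt = rectDiag σ :=
    hZt ▸ hWt ▸ transpose_mul_mul_of_eq_mul_mul_transpose hU hV hSVD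
  have hCA : Cᵀ * A = 0 :=
    transpose_submatrix_mul_submatrix_eq_zero hZtZt (Fin.castLE_ne_natAddSub hrp')
  have hCB : Cᵀ * B = 0 := by
    rw [transpose_submatrix_mul_submatrix, hZtWt, rectDiag_submatrix_castLE_natAddSub]
  obtain rfl : M = fromCols A B := Matrix.ext fun a j => j.casesOn (hMl a) (hMr a)
  have hgram : IsUnit ((fromCols A B)ᵀ * fromCols A B).det :=
    isUnit_det_gram_tails r hZtZt hWtWt hZtWt (abs_lt_one_of_antitone hσlt hσanti hσpos hσzero)
  obtain ⟨x, hx⟩ := exists_mulVec_eq_of_mem_span_col (C := C) hθmem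
  obtain ⟨a, ha⟩ := exists_mulVec_eq_of_mem_span_col (C := A) hβmem
  obtain ⟨b, rfl⟩ := exists_mulVec_eq_of_mem_span_col (C := B) hαmem
  rw [hPR, Finset.sum_attach_range_vecMulVec Zt hrp', hPC, hPN]
  exact projections_recover_components
    (transpose_submatrix_mul_submatrix_self hZtZt (Fin.castLE_injective hrp')) hCA hCB hgram
    hXinv b hx ha
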